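/- Let M be a finite set of m ≥ 3 items and let v_1,…,v_n : Finset M → ℝ be normalized, monotone, subadditive valuations. Set ℓ := ⌈log₂⌈log₂ m⌉⌉. Then Σ_{k=0}^{ℓ} g^v(2^{−2^k}) ≥ (1/2 − 1/m) · OPT(v). -/

import Mathlib

/-- The optimal welfare: supremum of `Σ_i v_i (x_i)` over allocations, i.e.
tuples of pairwise disjoint subsets of `M`. -/
noncomputable def OPT {M : Type*} [Fintype M] [DecidableEq M] {n : ℕ}
    (v : Fin n → Finset M → ℝ) : ℝ :=
  sSup { w : ℝ | ∃ x : Fin n → Finset M,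
    (∀ i k : Fin n, i ≠ k → Disjoint (x i) (x k)) ∧
    w = ∑ i : Fin n, v i (x i) }

/-- The value `g^v(q)` of the constrained zero-sum game: the protagonist
chooses a profile `λ ∈ Γ(q)` (subdistributions with total per-item marginal
at most `q`), the antagonist chooses a distribution `μ ∈ Δ_M(q)` (per-item
marginals at most `q`), and the payoff is
`Σ_T μ_T Σ_i Σ_S λ^i_S v_i (S \ T)`. -/
noncomputable def gv {M : Type*} [Fintype M] [DecidableEq M] {n : ℕ}
    (v : Fin n → Finset M → ℝ) (q : ℝ) : ℝ :=
  sSup { w : ℝ | ∃ lam : Fin n → Finset M → ℝ,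
    (∀ i, ∀ S : Finset M, 0 ≤ lam i S) ∧
    (∀ i, ∑ S : Finset M, lam i S ≤ 1) ∧
    (∀ j : M, ∑ i : Fin n,
      ∑ S ∈ Finset.univ.filter (fun S : Finset M => j ∈ S), lam i S ≤ q) ∧
    w = sInf { z : ℝ | ∃ mu : Finset M → ℝ,
      (∀ T : Finset M, 0 ≤ mu T) ∧
      (∑ T : Finset M, mu T = 1) ∧
      (∀ j : M, ∑ T ∈ Finset.univ.filter (fun T : Finset M => j ∈ T), mu T ≤ q) ∧
      z = ∑ T : Finset M, mu T *
            ∑ i : Fin n, ∑ S : Finset M, lam i S * v i (S \ T) } }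

section Aux

private lemma fiber_sum_mul {α β : Type*} [Fintype α] [Fintype β] [DecidableEq β]
    (g : α → β) (ν : α → ℝ) (c : β → ℝ) :
    ∑ b : β, (∑ a ∈ Finset.univ.filter (fun a => g a = b), ν a) * c b
      = ∑ a : α, ν a * c (g a) := by
  rw [← Finset.sum_fiberwise Finset.univ g (fun a => ν a * c (g a))]
  refine Finset.sum_congr rfl fun b _ => ?_
  rw [Finset.sum_mul]
  refine Finset.sum_congr rfl fun a ha => ?_
  rw [(Finset.mem_filter.mp ha).2]

private lemma fiber_sum_filter {α β : Type*} [Fintype α] [Fintype β] [DecidableEq β]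
    (g : α → β) (ν : α → ℝ) (p : β → Prop) [DecidablePred p] :
    ∑ b ∈ Finset.univ.filter p, (∑ a ∈ Finset.univ.filter (fun a => g a = b), ν a)
      = ∑ a ∈ Finset.univ.filter (fun a => p (g a)), ν a := by
  rw [Finset.sum_filter, Finset.sum_filter]
  have h := fiber_sum_mul g ν (fun b => if p b then (1:ℝ) else 0)
  simpa [mul_ite, mul_one, mul_zero] using h

private lemma subadd_singletons {M : Type*} [DecidableEq M] (f : Finset M → ℝ)
    (h0 : f ∅ = 0) (hsub : ∀ S T, f (S ∪ T) ≤ f S + f T) (S : Finset M) :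
    f S ≤ ∑ j ∈ S, f {j} := by
  classical
  refine Finset.induction_on S (by simp [h0]) ?_
  intro a s ha ih
  rw [Finset.sum_insert ha, Finset.insert_eq]
  calc f ({a} ∪ s) ≤ f {a} + f s := hsub _ _
    _ ≤ f {a} + ∑ j ∈ s, f {j} := by linarith

private lemma swap_inter_sum {M : Type*} [Fintype M] [DecidableEq M]
    (ν : Finset M → ℝ) (x : Finset M) (c : M → ℝ) :
    ∑ A : Finset M, ν A * ∑ j ∈ x ∩ A, c j
      = ∑ j ∈ x, (∑ A ∈ Finset.univ.filter (fun A : Finset M => j ∈ A), ν A) * c j := by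
  have h1 : ∀ A : Finset M, ν A * ∑ j ∈ x ∩ A, c j
      = ∑ j ∈ x, if j ∈ A then ν A * c j else 0 := by
    intro A
    rw [Finset.mul_sum, ← Finset.filter_mem_eq_inter, Finset.sum_filter]
  rw [Finset.sum_congr rfl (fun A _ => h1 A), Finset.sum_comm]
  refine Finset.sum_congr rfl fun j _ => ?_
  rw [Finset.sum_mul, Finset.sum_filter]

variable {M : Type*} [Fintype M] [DecidableEq M] {n : ℕ}

private lemma gv_mem_le (v : Fin n → Finset M → ℝ)
    (hnn : ∀ i S, 0 ≤ v i S) (hmono : ∀ i, ∀ S T : Finset M, S ⊆ T → v i S ≤ v i T)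
    (q : ℝ) (hq0 : 0 ≤ q) :
    ∀ w ∈ { w : ℝ | ∃ lam : Fin n → Finset M → ℝ,
      (∀ i, ∀ S : Finset M, 0 ≤ lam i S) ∧
      (∀ i, ∑ S : Finset M, lam i S ≤ 1) ∧
      (∀ j : M, ∑ i : Fin n,
        ∑ S ∈ Finset.univ.filter (fun S : Finset M => j ∈ S), lam i S ≤ q) ∧
      w = sInf { z : ℝ | ∃ mu : Finset M → ℝ,
        (∀ T : Finset M, 0 ≤ mu T) ∧
        (∑ T : Finset M, mu T = 1) ∧
        (∀ j : M, ∑ T ∈ Finset.univ.filter (fun T : Finset M => j ∈ T), mu T ≤ q) ∧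
        z = ∑ T : Finset M, mu T *
              ∑ i : Fin n, ∑ S : Finset M, lam i S * v i (S \ T) } },
      w ≤ ∑ i : Fin n, v i Finset.univ := by
  rintro w ⟨lam, hl0, hl1, -, rfl⟩
  set P := { z : ℝ | ∃ mu : Finset M → ℝ,
      (∀ T : Finset M, 0 ≤ mu T) ∧
      (∑ T : Finset M, mu T = 1) ∧
      (∀ j : M, ∑ T ∈ Finset.univ.filter (fun T : Finset M => j ∈ T), mu T ≤ q) ∧
      z = ∑ T : Finset M, mu T *
            ∑ i : Fin n, ∑ S : Finset M, lam i S * v i (S \ T) } with hP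
  have hz0 : (∑ i : Fin n, ∑ S : Finset M, lam i S * v i (S \ (∅ : Finset M))) ∈ P := by
    refine ⟨fun T => if T = ∅ then 1 else 0, fun T => by positivity, by simp, ?_, ?_⟩
    · intro j
      refine le_trans (le_of_eq (Finset.sum_eq_zero ?_)) hq0
      intro T hT
      have hj : j ∈ T := (Finset.mem_filter.mp hT).2
      have : T ≠ ∅ := fun h => by simp [h] at hj
      simp [this]
    · rw [Finset.sum_eq_single (∅ : Finset M)]
      · simp
      · intro T _ hT; simp [hT]
      · simp
  have hbdd : BddBelow P := by
    refine ⟨0, fun z hz => ?_⟩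
    obtain ⟨mu, hm0, -, -, rfl⟩ := hz
    apply Finset.sum_nonneg; intro T _
    apply mul_nonneg (hm0 T)
    apply Finset.sum_nonneg; intro i _
    apply Finset.sum_nonneg; intro S _
    exact mul_nonneg (hl0 i S) (hnn i _)
  refine le_trans (csInf_le hbdd hz0) ?_
  apply Finset.sum_le_sum; intro i _
  calc ∑ S : Finset M, lam i S * v i (S \ ∅)
      ≤ ∑ S : Finset M, lam i S * v i Finset.univ := by
        apply Finset.sum_le_sum; intro S _
        exact mul_le_mul_of_nonneg_left (hmono i _ _ (Finset.subset_univ _)) (hl0 i S)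
    _ = (∑ S : Finset M, lam i S) * v i Finset.univ := by rw [Finset.sum_mul]
    _ ≤ 1 * v i Finset.univ := mul_le_mul_of_nonneg_right (hl1 i) (hnn i _)
    _ = v i Finset.univ := one_mul _

private lemma gv_step (v : Fin n → Finset M → ℝ)
    (hnn : ∀ i S, 0 ≤ v i S)
    (hmono : ∀ i, ∀ S T : Finset M, S ⊆ T → v i S ≤ v i T)
    (hsub : ∀ i, ∀ S T : Finset M, v i (S ∪ T) ≤ v i S + v i T)
    (x : Fin n → Finset M) (hx : ∀ i k : Fin n, i ≠ k → Disjoint (x i) (x k))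
    (q : ℝ) (hq0 : 0 ≤ q)
    (ν : Finset M → ℝ) (hν0 : ∀ A, 0 ≤ ν A) (hν1 : ∑ A : Finset M, ν A = 1)
    (hνm : ∀ j : M, ∑ A ∈ Finset.univ.filter (fun A : Finset M => j ∈ A), ν A ≤ 2 * q)
    (ε : ℝ) (hε : 0 < ε) :
    ∃ ν' : Finset M → ℝ, (∀ A, 0 ≤ ν' A) ∧ (∑ A : Finset M, ν' A = 1) ∧
      (∀ j : M, ∑ A ∈ Finset.univ.filter (fun A : Finset M => j ∈ A), ν' A ≤ 2 * (q * q)) ∧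
      (1/2) * ((∑ i : Fin n, ∑ A : Finset M, ν A * v i (x i ∩ A))
        - (∑ i : Fin n, ∑ A : Finset M, ν' A * v i (x i ∩ A))) - ε ≤ gv v q := by
  classical
  set lam : Fin n → Finset M → ℝ :=
    fun i S => (1/2) * ∑ A ∈ Finset.univ.filter (fun A => x i ∩ A = S), ν A with hlam
  have hl0 : ∀ i S, 0 ≤ lam i S := by
    intro i S
    apply mul_nonneg (by norm_num)
    exact Finset.sum_nonneg fun A _ => hν0 A
  have hl1 : ∀ i, ∑ S : Finset M, lam i S = 1/2 := by
    intro i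
    rw [hlam]
    simp only []
    rw [← Finset.mul_sum, Finset.sum_fiberwise Finset.univ (fun A => x i ∩ A) ν, hν1, mul_one]
  have hlm : ∀ j : M, ∑ i : Fin n,
      ∑ S ∈ Finset.univ.filter (fun S : Finset M => j ∈ S), lam i S ≤ q := by
    intro j
    set C := ∑ A ∈ Finset.univ.filter (fun A : Finset M => j ∈ A), ν A with hC
    have hC0 : 0 ≤ C := Finset.sum_nonneg fun A _ => hν0 A
    have hfib : ∀ i, ∑ S ∈ Finset.univ.filter (fun S : Finset M => j ∈ S), lam i S
        = (1/2) * (if j ∈ x i then C else 0) := by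
      intro i
      simp only [hlam]
      rw [← Finset.mul_sum]
      congr 1
      rw [fiber_sum_filter (fun A => x i ∩ A) ν (fun S => j ∈ S)]
      by_cases hj : j ∈ x i
      · rw [if_pos hj, hC]
        apply Finset.sum_congr _ (fun _ _ => rfl)
        apply Finset.filter_congr
        intro A _
        simp [Finset.mem_inter, hj]
      · rw [if_neg hj]
        apply Finset.sum_eq_zero
        intro A hA
        exact absurd (Finset.mem_inter.mp (Finset.mem_filter.mp hA).2).1 hj
    have hsumle : (∑ i : Fin n, if j ∈ x i then C else 0) ≤ C := by
      by_cases hex : ∃ i₀ : Fin n, j ∈ x i₀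
      · obtain ⟨i₀, hi₀⟩ := hex
        have h1 : (∑ i : Fin n, if j ∈ x i then C else 0)
            ≤ ∑ i : Fin n, if i = i₀ then C else 0 := by
          apply Finset.sum_le_sum
          intro i _
          by_cases hji : j ∈ x i
          · have hieq : i = i₀ := by
              by_contra hne
              exact absurd hi₀ (Finset.disjoint_left.mp (hx i i₀ hne) hji)
            subst hieq
            simp [hji]
          · simp only [if_neg hji]
            split
            · exact hC0
            · exact le_refl 0
        have h2 : (∑ i : Fin n, if i = i₀ then C else 0) = C := by
          rw [Finset.sum_ite_eq' Finset.univ i₀ (fun _ => C)]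
          simp
        linarith
      · push_neg at hex
        rw [Finset.sum_eq_zero (fun i _ => if_neg (hex i))]
        exact hC0
    have hCq : C ≤ 2 * q := hνm j
    calc ∑ i : Fin n, ∑ S ∈ Finset.univ.filter (fun S : Finset M => j ∈ S), lam i S
        = ∑ i : Fin n, (1/2) * (if j ∈ x i then C else 0) :=
          Finset.sum_congr rfl fun i _ => hfib i
      _ = (1/2) * ∑ i : Fin n, (if j ∈ x i then C else 0) := by rw [Finset.mul_sum]
      _ ≤ q := by linarith
  set P := { z : ℝ | ∃ mu : Finset M → ℝ,
      (∀ T : Finset M, 0 ≤ mu T) ∧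
      (∑ T : Finset M, mu T = 1) ∧
      (∀ j : M, ∑ T ∈ Finset.univ.filter (fun T : Finset M => j ∈ T), mu T ≤ q) ∧
      z = ∑ T : Finset M, mu T *
            ∑ i : Fin n, ∑ S : Finset M, lam i S * v i (S \ T) } with hPdef
  have hPne : P.Nonempty := by
    refine ⟨∑ T : Finset M, (if T = ∅ then (1:ℝ) else 0) *
        ∑ i : Fin n, ∑ S : Finset M, lam i S * v i (S \ T),
      fun T => if T = ∅ then 1 else 0, fun T => by positivity, by simp, ?_, rfl⟩
    intro j
    refine le_trans (le_of_eq (Finset.sum_eq_zero ?_)) hq0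
    intro T hT
    have hj : j ∈ T := (Finset.mem_filter.mp hT).2
    have : T ≠ ∅ := fun h => by simp [h] at hj
    simp [this]
  obtain ⟨z, hzP, hzlt⟩ := Real.lt_sInf_add_pos hPne hε
  obtain ⟨mu, hm0, hm1, hmm, hzeq⟩ := hzP
  set ν' : Finset M → ℝ := fun A => ∑ T : Finset M,
      ∑ B ∈ Finset.univ.filter (fun B : Finset M => B ∩ T = A), ν B * mu T with hν'def
  have hν'0 : ∀ A, 0 ≤ ν' A := by
    intro A
    apply Finset.sum_nonneg; intro T _
    exact Finset.sum_nonneg fun B _ => mul_nonneg (hν0 B) (hm0 T)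
  have hν'1 : ∑ A : Finset M, ν' A = 1 := by
    rw [hν'def]
    simp only []
    rw [Finset.sum_comm]
    calc ∑ T : Finset M, ∑ A : Finset M,
          ∑ B ∈ Finset.univ.filter (fun B : Finset M => B ∩ T = A), ν B * mu T
        = ∑ T : Finset M, ∑ B : Finset M, ν B * mu T := by
          refine Finset.sum_congr rfl fun T _ => ?_
          exact Finset.sum_fiberwise Finset.univ (fun B => B ∩ T) (fun B => ν B * mu T)
      _ = ∑ T : Finset M, (∑ B : Finset M, ν B) * mu T := by
          refine Finset.sum_congr rfl fun T _ => ?_; rw [Finset.sum_mul]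
      _ = 1 := by rw [hν1]; simpa using hm1
  have hν'm : ∀ j : M,
      ∑ A ∈ Finset.univ.filter (fun A : Finset M => j ∈ A), ν' A ≤ 2 * (q * q) := by
    intro j
    have : ∑ A ∈ Finset.univ.filter (fun A : Finset M => j ∈ A), ν' A
        = ∑ T : Finset M, (if j ∈ T then
            (∑ B ∈ Finset.univ.filter (fun B : Finset M => j ∈ B), ν B) * mu T else 0) := by
      rw [hν'def]
      simp only []
      rw [Finset.sum_comm]
      refine Finset.sum_congr rfl fun T _ => ?_
      rw [fiber_sum_filter (fun B => B ∩ T) (fun B => ν B * mu T) (fun A => j ∈ A)]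
      by_cases hj : j ∈ T
      · rw [if_pos hj, Finset.sum_mul]
        apply Finset.sum_congr _ (fun _ _ => rfl)
        apply Finset.filter_congr
        intro B _
        simp [Finset.mem_inter, hj]
      · rw [if_neg hj]
        apply Finset.sum_eq_zero
        intro B hB
        exact absurd (Finset.mem_inter.mp (Finset.mem_filter.mp hB).2).2 hj
    rw [this]
    have hnnB : 0 ≤ ∑ B ∈ Finset.univ.filter (fun B : Finset M => j ∈ B), ν B :=
      Finset.sum_nonneg fun B _ => hν0 B
    calc ∑ T : Finset M, (if j ∈ T then
          (∑ B ∈ Finset.univ.filter (fun B : Finset M => j ∈ B), ν B) * mu T else 0)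
        = (∑ B ∈ Finset.univ.filter (fun B : Finset M => j ∈ B), ν B) *
            ∑ T ∈ Finset.univ.filter (fun T : Finset M => j ∈ T), mu T := by
          rw [Finset.mul_sum]
          exact (Finset.sum_filter (fun T : Finset M => j ∈ T)
            (fun T => (∑ B ∈ Finset.univ.filter
              (fun B : Finset M => j ∈ B), ν B) * mu T)).symm
      _ ≤ (2 * q) * q := by
          apply mul_le_mul (hνm j) (hmm j) _ (by positivity)
          exact Finset.sum_nonneg fun T _ => hm0 T
      _ = 2 * (q * q) := by ring
  refine ⟨ν', hν'0, hν'1, hν'm, ?_⟩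
  -- Now the value inequality.
  have hz_ge : (1/2) * ((∑ i : Fin n, ∑ A : Finset M, ν A * v i (x i ∩ A))
      - (∑ i : Fin n, ∑ A : Finset M, ν' A * v i (x i ∩ A))) ≤ z := by
    have hstep1 : z = (1/2) * ∑ T : Finset M, mu T *
        ∑ i : Fin n, ∑ A : Finset M, ν A * v i ((x i ∩ A) \ T) := by
      rw [hzeq, Finset.mul_sum]
      refine Finset.sum_congr rfl fun T _ => ?_
      have hG : ∑ i : Fin n, ∑ S : Finset M, lam i S * v i (S \ T)
          = ∑ i : Fin n, (1/2) * ∑ A : Finset M, ν A * v i ((x i ∩ A) \ T) := by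
        refine Finset.sum_congr rfl fun i _ => ?_
        rw [← fiber_sum_mul (fun A => x i ∩ A) ν (fun S => v i (S \ T)), Finset.mul_sum]
        refine Finset.sum_congr rfl fun S _ => ?_
        simp only [hlam]
        ring
      rw [hG, ← Finset.mul_sum]
      ring
    have hstep4 : ∑ T : Finset M, mu T *
        ∑ i : Fin n, ∑ A : Finset M, ν A * v i (x i ∩ A ∩ T)
        = ∑ i : Fin n, ∑ A : Finset M, ν' A * v i (x i ∩ A) := by
      have h1 : ∀ T : Finset M,
          mu T * ∑ i : Fin n, ∑ A : Finset M, ν A * v i (x i ∩ A ∩ T)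
          = ∑ i : Fin n, ∑ A : Finset M,
              (∑ B ∈ Finset.univ.filter (fun B : Finset M => B ∩ T = A), ν B * mu T)
                * v i (x i ∩ A) := by
        intro T
        rw [Finset.mul_sum]
        refine Finset.sum_congr rfl fun i _ => ?_
        rw [fiber_sum_mul (fun B => B ∩ T) (fun B => ν B * mu T)
          (fun A => v i (x i ∩ A)), Finset.mul_sum]
        refine Finset.sum_congr rfl fun B _ => ?_
        rw [← Finset.inter_assoc]
        ring
      rw [Finset.sum_congr rfl fun T _ => h1 T, Finset.sum_comm]
      refine Finset.sum_congr rfl fun i _ => ?_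
      rw [Finset.sum_comm]
      refine Finset.sum_congr rfl fun A _ => ?_
      simp only [hν'def]
      rw [Finset.sum_mul]
    have hmain : (∑ i : Fin n, ∑ A : Finset M, ν A * v i (x i ∩ A))
        - (∑ i : Fin n, ∑ A : Finset M, ν' A * v i (x i ∩ A))
        ≤ ∑ T : Finset M, mu T *
          ∑ i : Fin n, ∑ A : Finset M, ν A * v i ((x i ∩ A) \ T) := by
      rw [← hstep4]
      have : (∑ i : Fin n, ∑ A : Finset M, ν A * v i (x i ∩ A))
          = ∑ T : Finset M, mu T * ∑ i : Fin n, ∑ A : Finset M, ν A * v i (x i ∩ A) := by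
        rw [← Finset.sum_mul, hm1, one_mul]
      rw [this, ← Finset.sum_sub_distrib]
      apply Finset.sum_le_sum
      intro T _
      rw [← mul_sub]
      apply mul_le_mul_of_nonneg_left _ (hm0 T)
      rw [← Finset.sum_sub_distrib]
      apply Finset.sum_le_sum
      intro i _
      rw [← Finset.sum_sub_distrib]
      apply Finset.sum_le_sum
      intro A _
      rw [← mul_sub]
      apply mul_le_mul_of_nonneg_left _ (hν0 A)
      have hdecomp : v i (x i ∩ A) ≤ v i ((x i ∩ A) \ T) + v i (x i ∩ A ∩ T) := by
        calc v i (x i ∩ A) = v i (((x i ∩ A) \ T) ∪ ((x i ∩ A) ∩ T)) := by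
              rw [Finset.sdiff_union_inter]
          _ ≤ v i ((x i ∩ A) \ T) + v i ((x i ∩ A) ∩ T) := hsub i _ _
      linarith
    rw [hstep1]
    have := mul_le_mul_of_nonneg_left hmain (by norm_num : (0:ℝ) ≤ 1/2)
    linarith
  have hwP : sInf P ∈ { w : ℝ | ∃ lam : Fin n → Finset M → ℝ,
      (∀ i, ∀ S : Finset M, 0 ≤ lam i S) ∧
      (∀ i, ∑ S : Finset M, lam i S ≤ 1) ∧
      (∀ j : M, ∑ i : Fin n,
        ∑ S ∈ Finset.univ.filter (fun S : Finset M => j ∈ S), lam i S ≤ q) ∧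
      w = sInf { z : ℝ | ∃ mu : Finset M → ℝ,
        (∀ T : Finset M, 0 ≤ mu T) ∧
        (∑ T : Finset M, mu T = 1) ∧
        (∀ j : M, ∑ T ∈ Finset.univ.filter (fun T : Finset M => j ∈ T), mu T ≤ q) ∧
        z = ∑ T : Finset M, mu T *
              ∑ i : Fin n, ∑ S : Finset M, lam i S * v i (S \ T) } } :=
    ⟨lam, hl0, fun i => (hl1 i).le.trans (by norm_num), hlm, rfl⟩
  have hgv : sInf P ≤ gv v q := by
    apply le_csSup _ hwP
    exact ⟨∑ i : Fin n, v i Finset.univ, fun w hw => gv_mem_le v hnn hmono q hq0 w hw⟩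
  have : (1/2) * ((∑ i : Fin n, ∑ A : Finset M, ν A * v i (x i ∩ A))
      - (∑ i : Fin n, ∑ A : Finset M, ν' A * v i (x i ∩ A))) - ε ≤ sInf P := by
    have := hz_ge
    have := hzlt
    linarith
  linarith

private lemma qsq (k : ℕ) :
    ((2:ℝ) ^ (2 ^ k))⁻¹ * ((2:ℝ) ^ (2 ^ k))⁻¹ = ((2:ℝ) ^ (2 ^ (k+1)))⁻¹ := by
  rw [← mul_inv]
  congr 1
  rw [← pow_add]
  congr 1
  rw [pow_succ, mul_two]

private lemma gv_chain (v : Fin n → Finset M → ℝ)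
    (hnn : ∀ i S, 0 ≤ v i S)
    (hmono : ∀ i, ∀ S T : Finset M, S ⊆ T → v i S ≤ v i T)
    (hsub : ∀ i, ∀ S T : Finset M, v i (S ∪ T) ≤ v i S + v i T)
    (x : Fin n → Finset M) (hx : ∀ i k : Fin n, i ≠ k → Disjoint (x i) (x k))
    (ε : ℝ) (hε : 0 < ε) (t : ℕ) :
    ∃ ν' : Finset M → ℝ, (∀ A, 0 ≤ ν' A) ∧ (∑ A : Finset M, ν' A = 1) ∧
      (∀ j : M, ∑ A ∈ Finset.univ.filter (fun A : Finset M => j ∈ A), ν' A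
        ≤ 2 * ((2:ℝ) ^ (2 ^ (t+1)))⁻¹) ∧
      (1/2) * ((∑ i : Fin n, v i (x i))
        - (∑ i : Fin n, ∑ A : Finset M, ν' A * v i (x i ∩ A))) - ((t:ℝ)+1) * ε
        ≤ ∑ k ∈ Finset.range (t+1), gv v (((2:ℝ) ^ (2 ^ k))⁻¹) := by
  classical
  induction t with
  | zero =>
    set ν₀ : Finset M → ℝ := fun A => if A = Finset.univ then 1 else 0 with hν₀
    have h0 : ∀ A, 0 ≤ ν₀ A := fun A => by rw [hν₀]; positivity
    have h1 : ∑ A : Finset M, ν₀ A = 1 := by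
      rw [hν₀, Finset.sum_ite_eq' Finset.univ Finset.univ (fun _ => (1:ℝ))]; simp
    have hmarg : ∀ j : M, ∑ A ∈ Finset.univ.filter (fun A : Finset M => j ∈ A), ν₀ A
        ≤ 2 * ((2:ℝ) ^ (2 ^ 0))⁻¹ := by
      intro j
      rw [hν₀, Finset.sum_ite_eq' _ Finset.univ (fun _ => (1:ℝ))]
      norm_num
    obtain ⟨ν', h'0, h'1, h'm, h'ineq⟩ := gv_step v hnn hmono hsub x hx
      (((2:ℝ) ^ (2 ^ 0))⁻¹) (by positivity) ν₀ h0 h1 hmarg ε hε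
    refine ⟨ν', h'0, h'1, ?_, ?_⟩
    · intro j
      refine le_trans (h'm j) (le_of_eq ?_)
      rw [qsq 0]
    · have hL0 : ∑ i : Fin n, ∑ A : Finset M, ν₀ A * v i (x i ∩ A)
          = ∑ i : Fin n, v i (x i) := by
        refine Finset.sum_congr rfl fun i _ => ?_
        rw [hν₀]
        simp only [ite_mul, one_mul, zero_mul]
        rw [Finset.sum_ite_eq' Finset.univ Finset.univ (fun A => v i (x i ∩ A))]
        simp
      rw [Finset.sum_range_one]
      rw [hL0] at h'ineq
      push_cast
      linarith
  | succ t ih =>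
    obtain ⟨ν', h'0, h'1, h'm, h'ineq⟩ := ih
    obtain ⟨ν'', h''0, h''1, h''m, h''ineq⟩ := gv_step v hnn hmono hsub x hx
      (((2:ℝ) ^ (2 ^ (t+1)))⁻¹) (by positivity) ν' h'0 h'1 h'm ε hε
    refine ⟨ν'', h''0, h''1, ?_, ?_⟩
    · intro j
      refine le_trans (h''m j) (le_of_eq ?_)
      rw [qsq (t+1)]
    · rw [Finset.sum_range_succ]
      push_cast
      push_cast at h'ineq
      linarith

end Aux

/-- **Telescoping bound on the game values (Lemma on the average of `g`).**
For `m ≥ 3` items and normalized, monotone, subadditive valuations, with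
`ℓ = ⌈log₂⌈log₂ m⌉⌉`: `Σ_{k=0}^{ℓ} g^v(2^{-2^k}) ≥ (1/2 - 1/m) · OPT(v)`. -/
theorem stmt_8 {M : Type*} [Fintype M] [DecidableEq M] {n : ℕ}
    (hm : 3 ≤ Fintype.card M)
    (v : Fin n → Finset M → ℝ)
    (hnorm : ∀ i, v i ∅ = 0)
    (hmono : ∀ i, ∀ S T : Finset M, S ⊆ T → v i S ≤ v i T)
    (hsub : ∀ i, ∀ S T : Finset M, v i (S ∪ T) ≤ v i S + v i T) :
    ∑ k ∈ Finset.range (Nat.clog 2 (Nat.clog 2 (Fintype.card M)) + 1),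
        gv v (((2 : ℝ) ^ (2 ^ k))⁻¹) ≥
      (1 / 2 - 1 / (Fintype.card M : ℝ)) * OPT v := by
  classical
  set m := Fintype.card M with hmdef
  set ℓ := Nat.clog 2 (Nat.clog 2 m) with hℓdef
  set G := ∑ k ∈ Finset.range (ℓ + 1), gv v (((2 : ℝ) ^ (2 ^ k))⁻¹) with hGdef
  have hnn : ∀ i S, 0 ≤ v i S := by
    intro i S
    have := hmono i ∅ S (Finset.empty_subset S)
    rw [hnorm i] at this
    exact this
  have hm3 : (3:ℝ) ≤ (m:ℝ) := by exact_mod_cast hm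
  have hm0 : (0:ℝ) < (m:ℝ) := by linarith
  have hc : (0:ℝ) < 1/2 - 1/(m:ℝ) := by
    have : 1/(m:ℝ) ≤ 1/3 := by
      apply div_le_div_of_nonneg_left (by norm_num) (by norm_num) hm3
    linarith
  -- bound on the final scale
  have hpow : (m:ℝ) * (m:ℝ) ≤ (2:ℝ) ^ (2 ^ (ℓ+1)) := by
    have h1 : m ≤ 2 ^ (2 ^ ℓ) := by
      calc m ≤ 2 ^ Nat.clog 2 m := Nat.le_pow_clog (by norm_num) m
        _ ≤ 2 ^ (2 ^ ℓ) := Nat.pow_le_pow_right (by norm_num)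
            (Nat.le_pow_clog (by norm_num) _)
    have h2 : m * m ≤ 2 ^ (2 ^ (ℓ+1)) := by
      calc m * m ≤ 2 ^ (2 ^ ℓ) * 2 ^ (2 ^ ℓ) := Nat.mul_le_mul h1 h1
        _ = 2 ^ (2 ^ ℓ + 2 ^ ℓ) := by rw [pow_add]
        _ = 2 ^ (2 ^ (ℓ+1)) := by rw [pow_succ, mul_two]
    exact_mod_cast h2
  have hqf : 2 * ((2:ℝ) ^ (2 ^ (ℓ+1)))⁻¹ * (m:ℝ) ≤ 2 / (m:ℝ) := by
    have hp : (0:ℝ) < (2:ℝ) ^ (2 ^ (ℓ+1)) := by positivity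
    have key2 : (m:ℝ) / (2:ℝ) ^ (2 ^ (ℓ+1)) ≤ 1 / (m:ℝ) := by
      rw [div_le_div_iff₀ hp hm0]
      nlinarith [hpow]
    calc 2 * ((2:ℝ) ^ (2 ^ (ℓ+1)))⁻¹ * (m:ℝ)
        = 2 * ((m:ℝ) / (2:ℝ) ^ (2 ^ (ℓ+1))) := by ring
      _ ≤ 2 * (1/(m:ℝ)) := by linarith
      _ = 2 / (m:ℝ) := by ring
  -- main bound for each allocation
  have key : ∀ w ∈ { w : ℝ | ∃ x : Fin n → Finset M,
      (∀ i k : Fin n, i ≠ k → Disjoint (x i) (x k)) ∧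
      w = ∑ i : Fin n, v i (x i) }, (1/2 - 1/(m:ℝ)) * w ≤ G := by
    rintro w ⟨x, hx, rfl⟩
    set w := ∑ i : Fin n, v i (x i) with hwdef
    have hw0 : 0 ≤ w := Finset.sum_nonneg fun i _ => hnn i _
    apply le_of_forall_pos_le_add
    intro ε hε
    have hε' : 0 < ε / ((ℓ:ℝ)+1) := by positivity
    obtain ⟨ν', h'0, h'1, h'm, h'ineq⟩ := gv_chain v hnn hmono hsub x hx
      (ε / ((ℓ:ℝ)+1)) hε' ℓ
    -- bound L' := ∑ i ∑ A ν' A * v i (x i ∩ A)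
    set L' := ∑ i : Fin n, ∑ A : Finset M, ν' A * v i (x i ∩ A) with hL'def
    have hL'le : L' ≤ 2 * ((2:ℝ) ^ (2 ^ (ℓ+1)))⁻¹ * (m:ℝ) * w := by
      rw [hL'def, hwdef, Finset.mul_sum]
      apply Finset.sum_le_sum
      intro i _
      calc ∑ A : Finset M, ν' A * v i (x i ∩ A)
          ≤ ∑ A : Finset M, ν' A * ∑ j ∈ x i ∩ A, v i {j} := by
            apply Finset.sum_le_sum
            intro A _
            exact mul_le_mul_of_nonneg_left
              (subadd_singletons (v i) (hnorm i) (hsub i) _) (h'0 A)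
        _ = ∑ j ∈ x i, (∑ A ∈ Finset.univ.filter (fun A : Finset M => j ∈ A), ν' A)
              * v i {j} := swap_inter_sum ν' (x i) (fun j => v i {j})
        _ ≤ ∑ j ∈ x i, (2 * ((2:ℝ) ^ (2 ^ (ℓ+1)))⁻¹) * v i (x i) := by
            apply Finset.sum_le_sum
            intro j hj
            apply mul_le_mul (h'm j)
              (hmono i _ _ (Finset.singleton_subset_iff.mpr hj)) (hnn i _)
            positivity
        _ = ((x i).card : ℝ) * ((2 * ((2:ℝ) ^ (2 ^ (ℓ+1)))⁻¹) * v i (x i)) := by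
            rw [Finset.sum_const, nsmul_eq_mul]
        _ ≤ (m:ℝ) * ((2 * ((2:ℝ) ^ (2 ^ (ℓ+1)))⁻¹) * v i (x i)) := by
            apply mul_le_mul_of_nonneg_right _
              (mul_nonneg (by positivity) (hnn i _))
            exact_mod_cast Finset.card_le_card (Finset.subset_univ (x i))
        _ = 2 * ((2:ℝ) ^ (2 ^ (ℓ+1)))⁻¹ * (m:ℝ) * v i (x i) := by ring
    have hL'le2 : L' ≤ 2 / (m:ℝ) * w := by
      calc L' ≤ 2 * ((2:ℝ) ^ (2 ^ (ℓ+1)))⁻¹ * (m:ℝ) * w := hL'le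
        _ ≤ 2 / (m:ℝ) * w := mul_le_mul_of_nonneg_right hqf hw0
    have heps : ((ℓ:ℝ)+1) * (ε / ((ℓ:ℝ)+1)) = ε := by
      field_simp
    rw [heps] at h'ineq
    have : (1/2) * (w - 2/(m:ℝ) * w) ≤ (1/2) * (w - L') := by linarith
    have hfin : (1/2 - 1/(m:ℝ)) * w = (1/2) * (w - 2/(m:ℝ) * w) := by
      field_simp
    rw [hfin]
    linarith
  -- conclude via csSup
  have hne : { w : ℝ | ∃ x : Fin n → Finset M,
      (∀ i k : Fin n, i ≠ k → Disjoint (x i) (x k)) ∧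
      w = ∑ i : Fin n, v i (x i) }.Nonempty := by
    exact ⟨∑ i : Fin n, v i ((fun _ => (∅ : Finset M)) i), fun _ => ∅,
      fun i k _ => Finset.disjoint_empty_left _, rfl⟩
  have hOPT : OPT v ≤ G / (1/2 - 1/(m:ℝ)) := by
    apply csSup_le hne
    intro w hw
    rw [le_div_iff₀ hc, mul_comm]
    exact key w hw
  have := mul_le_mul_of_nonneg_left hOPT (le_of_lt hc)
  rw [mul_div_cancel₀ _ (ne_of_gt hc)] at this
  exact this
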